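/- Let Φ be a Young function of class Δ₂ ∩ ∇₂ and let W: ℝ³ × ℝ^{3×3} → ℝ be a Carathéodory function, 1-periodic in the planar variable x_α, satisfying β'Φ(|ξ|) − 1/β' ≤ W(x,ξ) ≤ β(1+Φ(|ξ|)) for some 0<β'<β. Then for every ξ_α ∈ ℝ^{3×2} the limit lim_{t→+∞} t^{−2} · inf{ ∫_{(tQ')₁} W(x, (ξ_α+∇_αφ | ∇₃φ)) dx : φ ∈ 𝒜_t } exists and is a finite real number (i.e. the liminf and limsup over real t → +∞ of the scaled cell infima coincide). -/

import Mathlib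

open MeasureTheory Filter

noncomputable section

abbrev V3 : Type := Fin 3 → ℝ
abbrev V2 : Type := Fin 2 → ℝ
abbrev M33 : Type := Matrix (Fin 3) (Fin 3) ℝ
abbrev M32 : Type := Matrix (Fin 3) (Fin 2) ℝ

/-- `Φ : [0,∞) → [0,∞)` is a Young function: continuous, convex, positive for `t > 0`,
`Φ(t)/t → 0` as `t → 0⁺` and `Φ(t)/t → ∞` as `t → ∞`. -/
def IsYoung (Φ : ℝ → ℝ) : Prop :=
  ContinuousOn Φ (Set.Ici 0) ∧ ConvexOn ℝ (Set.Ici 0) Φ ∧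
  (∀ t : ℝ, 0 < t → 0 < Φ t) ∧
  Tendsto (fun t => Φ t / t) (nhdsWithin 0 (Set.Ioi 0)) (nhds 0) ∧
  Tendsto (fun t => Φ t / t) atTop atTop

/-- The Δ₂ condition (at infinity). -/
def Delta2 (Φ : ℝ → ℝ) : Prop :=
  ∃ α : ℝ, 0 < α ∧ ∃ t₀ : ℝ, 0 ≤ t₀ ∧ ∀ t, t₀ ≤ t → Φ (2 * t) ≤ α * Φ t

/-- The ∇₂ condition. -/
def Nabla2 (Φ : ℝ → ℝ) : Prop :=
  ∃ β : ℝ, 0 < β ∧ ∃ t₀ : ℝ, 1 < t₀ ∧ ∀ t, t₀ ≤ t → Φ t ≤ (1 / (2 * β)) * Φ (β * t)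

/-- Frobenius norm of a real matrix. -/
def frobNorm {m n : ℕ} (ξ : Matrix (Fin m) (Fin n) ℝ) : ℝ :=
  Real.sqrt (∑ i, ∑ j, (ξ i j) ^ 2)

/-- The open cylinder `(tQ')₁ = (−t/2,t/2)² × (−1/2,1/2)`. -/
def openCyl (t : ℝ) : Set V3 := {x | |x 0| < t / 2 ∧ |x 1| < t / 2 ∧ |x 2| < 1 / 2}

/-- The lateral boundary `∂((−t/2,t/2)²) × (−1/2,1/2)`. -/
def latBdry (t : ℝ) : Set V3 := {x | max |x 0| |x 1| = t / 2 ∧ |x 2| < 1 / 2}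

/-- The (a.e. defined, via Rademacher) matrix of partial derivatives of a Lipschitz map:
row `i`, column `j` is `∂φᵢ/∂xⱼ`. -/
def gradm (φ : V3 → V3) (x : V3) : M33 :=
  Matrix.of fun i j => fderiv ℝ φ x (Pi.single j 1) i

/-- Planar-gradient matrix (3×2) of a map on `ℝ²`. -/
def gradm2 (ψ : V2 → V3) (y : V2) : M32 :=
  Matrix.of fun i j => fderiv ℝ ψ y (Pi.single j 1) i

/-- The 3×3 matrix `(ξ_α + ∇_αφ | ∇₃φ)`: first two columns of `A` shifted by `ξ_α`,
third column untouched. -/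
def withCol (ξα : M32) (A : M33) : M33 :=
  Matrix.of fun i j => (if h : (j : ℕ) < 2 then ξα i ⟨(j : ℕ), h⟩ else 0) + A i j

/-- The admissible class `𝒜_t`: Lipschitz maps vanishing on the lateral boundary. -/
def AdmSet (t : ℝ) : Set (V3 → V3) :=
  {φ | (∃ K : NNReal, LipschitzWith K φ) ∧ ∀ x ∈ latBdry t, φ x = 0}

/-- The constrained admissible class `𝒜_t(V)`: members of `𝒜_t` with values in `V`. -/
def AdmVSet (t : ℝ) (V : Submodule ℝ V3) : Set (V3 → V3) :=
  {φ | φ ∈ AdmSet t ∧ ∀ x, φ x ∈ V}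

/-- The cell energy `∫_{(tQ')₁} f(x, (ξ_α + ∇_αφ | ∇₃φ)) dx`. -/
def cellE (f : V3 → M33 → ℝ) (ξα : M32) (t : ℝ) (φ : V3 → V3) : ℝ :=
  ∫ x in openCyl t, f x (withCol ξα (gradm φ x))

/-- The cell infimum over a class `S` of test maps. -/
def cellInf (f : V3 → M33 → ℝ) (ξα : M32) (t : ℝ) (S : Set (V3 → V3)) : ℝ :=
  sInf ((fun φ => cellE f ξα t φ) '' S)

/-- The constrained tangentially homogenized density `Tf⁰hom(V, ξ_α)`. -/
def Tf0hom (f : V3 → M33 → ℝ) (V : Submodule ℝ V3) (ξα : M32) : ℝ :=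
  liminf (fun t : ℝ => (t ^ 2)⁻¹ * cellInf f ξα t (AdmVSet t V)) atTop

/-- The unconstrained homogenized density (liminf of the scaled cell infima over `𝒜_t`). -/
def homDens (f : V3 → M33 → ℝ) (ξα : M32) : ℝ :=
  liminf (fun t : ℝ => (t ^ 2)⁻¹ * cellInf f ξα t (AdmSet t)) atTop

/-- `P` is the orthogonal projection of `ℝ³` onto the subspace `V` (with respect to the
Euclidean inner product). -/
def IsOrthProjOnto (V : Submodule ℝ V3) (P : V3 → V3) : Prop :=
  IsLinearMap ℝ P ∧ (∀ x, P x ∈ V) ∧ (∀ x ∈ V, P x = x) ∧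
    (∀ x : V3, ∀ v ∈ V, (∑ i, (x i - P x i) * v i) = 0)

/-- Column-wise action `𝐏ξ = (Pξ₁ | Pξ₂ | Pξ₃)` of a projection on 3×3 matrices. -/
def Pmat (P : V3 → V3) (ξ : M33) : M33 :=
  Matrix.of fun i j => P (fun k => ξ k j) i

/-- The penalized integrand `f̄(x,ξ) = f(x,𝐏ξ) + Φ(|ξ − 𝐏ξ|)`. -/
def fbar (Φ : ℝ → ℝ) (P : V3 → V3) (f : V3 → M33 → ℝ) : V3 → M33 → ℝ :=
  fun x ξ => f x (Pmat P ξ) + Φ (frobNorm (ξ - Pmat P ξ))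

/-- Carathéodory function: measurable in `x`, continuous in `ξ`. -/
def Caratheodory (f : V3 → M33 → ℝ) : Prop :=
  (∀ ξ, Measurable fun x => f x ξ) ∧ (∀ x, Continuous fun ξ => f x ξ)

/-- (H1): 1-periodicity in the planar variable. -/
def H1per (f : V3 → M33 → ℝ) : Prop :=
  ∀ (x : V3) (ξ : M33) (i : Fin 3), (i : ℕ) < 2 → f (x + Pi.single i 1) ξ = f x ξ

/-- (H2): `Φ`-coercivity and `Φ`-growth, for a.e. `x` and all `ξ`. -/
def H2growth (Φ : ℝ → ℝ) (α β : ℝ) (f : V3 → M33 → ℝ) : Prop :=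
  ∀ᵐ x : V3 ∂volume, ∀ ξ : M33, α * Φ (frobNorm ξ) ≤ f x ξ ∧ f x ξ ≤ β * (1 + Φ (frobNorm ξ))

/-- `ξ_α ∈ V²`: both columns of the 3×2 matrix belong to `V`. -/
def colsIn (V : Submodule ℝ V3) (ξα : M32) : Prop :=
  ∀ j : Fin 2, (fun i => ξα i j) ∈ V

/-- The open unit square `Q' = (−1/2,1/2)²`. -/
def sq2 : Set V2 := {y | |y 0| < 1 / 2 ∧ |y 1| < 1 / 2}

/-!
Write `m t` for the cell infimum at scale `t`; the growth bounds give `|m t| ≤ B t²`. Two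
comparison inequalities come from gluing test maps. A test map on a cell of side `s`, extended off
the cell through the retraction onto it, is admissible on any larger cell, and the rest of that
cell costs at most the energy of the zero map: `m t ≤ m s + B (t² - s²)`. By periodicity, `k²`
integer translates of a test map on a cell of even side `2u` tile the cell of side `2ku`:
`m (2ku) ≤ k² m (2u)`. As in Fekete's lemma, these force `m t / t²` to converge: its limsup is at
most its value at any even scale `2u`, which exceeds its value at a scale `s ∈ [2u - 2, 2u]` by
`O(1 / s)` only.
-/

open Set MeasureTheory Filter Topology
open scoped Pointwise

theorem LipschitzWith.finset_sum {α ι E : Type*} [PseudoEMetricSpace α] [SeminormedAddCommGroup E]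
    (s : Finset ι) {f : ι → α → E} {K : ι → NNReal} (h : ∀ i ∈ s, LipschitzWith (K i) (f i)) :
    LipschitzWith (∑ i ∈ s, K i) fun x => ∑ i ∈ s, f i x := by
  classical
  induction s using Finset.induction_on with
  | empty => simpa using LipschitzWith.const (0 : E)
  | insert i s hi ih =>
    simp only [Finset.sum_insert hi]
    exact (h i (Finset.mem_insert_self i s)).add (ih fun j hj => h j (Finset.mem_insert_of_mem hj))

theorem le_mul_csInf_add {S : Set ℝ} (hS : S.Nonempty) {k x b : ℝ} (hk : 0 ≤ k)
    (h : ∀ e ∈ S, x ≤ k * e + b) : x ≤ k * sInf S + b := by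
  have : x - b ≤ sInf (k • S) :=
    le_csInf (hS.smul_set) (by rintro _ ⟨e, he, rfl⟩; linarith [h e he, smul_eq_mul k e])
  rw [Real.sInf_smul_of_nonneg hk, smul_eq_mul] at this
  linarith

theorem IsYoung.nonneg {Φ : ℝ → ℝ} (h : IsYoung Φ) {r : ℝ} (hr : 0 ≤ r) : 0 ≤ Φ r := by
  rcases hr.lt_or_eq with hr | rfl
  · exact (h.2.2.1 r hr).le
  · exact ge_of_tendsto ((h.1 0 (mem_Ici.2 le_rfl)).mono Ioi_subset_Ici_self).tendsto
      (eventually_nhdsWithin_of_forall fun t ht => (h.2.2.1 t ht).le)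

theorem IsYoung.exists_le {Φ : ℝ → ℝ} (h : IsYoung Φ) (R : ℝ) :
    ∃ M, ∀ r, 0 ≤ r → r ≤ R → Φ r ≤ M := by
  obtain ⟨M, hM⟩ := isCompact_Icc.bddAbove_image (h.1.mono Icc_subset_Ici_self)
  exact ⟨M, fun r h0 hR => hM ⟨r, ⟨h0, hR⟩, rfl⟩⟩

theorem H1per.apply_add_zsmul {W : V3 → M33 → ℝ} (h : H1per W) {i : Fin 3} (hi : (i : ℕ) < 2)
    (n : ℤ) (x : V3) (ξ : M33) : W (x + (n : ℝ) • Pi.single i 1) ξ = W x ξ := by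
  have hper : Function.Periodic (fun r : ℝ => W (x + r • Pi.single i 1) ξ) 1 := fun r => by
    simp only [add_smul, one_smul, ← add_assoc]
    exact h _ ξ i hi
  simpa using hper.int_mul_eq n

theorem H1per.apply_add_int {W : V3 → M33 → ℝ} (h : H1per W) (m n : ℤ) (x : V3) (ξ : M33) :
    W (x + ![(m : ℝ), n, 0]) ξ = W x ξ := by
  have hvec : x + ![(m : ℝ), n, 0] = x + (m : ℝ) • Pi.single 0 1 + (n : ℝ) • Pi.single 1 1 := by
    ext i
    fin_cases i <;> simp
  rw [hvec, h.apply_add_zsmul (i := 1) (by norm_num), h.apply_add_zsmul (i := 0) (by norm_num)]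

section Asymptotics

variable {g m : ℝ → ℝ} {a B D : ℝ}

theorem limsup_le_of_eventually_le_add_div (hg : IsBoundedUnder (· ≥ ·) atTop g)
    (h : ∀ᶠ t in atTop, g t ≤ a + D / t) : limsup g atTop ≤ a := by
  have hD : Tendsto (fun t : ℝ => D / t) atTop (𝓝 0) := tendsto_const_nhds.div_atTop tendsto_id
  have h0 : Tendsto (fun t => a + D / t) atTop (𝓝 a) := by
    simpa using (tendsto_const_nhds (x := a)).add hD
  exact (limsup_le_limsup h hg.isCoboundedUnder_le h0.isBoundedUnder_le).trans_eq h0.limsup_eq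

theorem le_liminf_of_eventually_le_add_div (hg : IsBoundedUnder (· ≤ ·) atTop g)
    (h : ∀ᶠ t in atTop, a ≤ g t + D / t) : a ≤ liminf g atTop := by
  have hD : Tendsto (fun t : ℝ => D / t) atTop (𝓝 0) := tendsto_const_nhds.div_atTop tendsto_id
  have h0 : Tendsto (fun t => a - D / t) atTop (𝓝 a) := by
    simpa using (tendsto_const_nhds (x := a)).sub hD
  exact h0.liminf_eq.symm.trans_le (liminf_le_liminf (h.mono fun t ht => by linarith)
    h0.isBoundedUnder_ge hg.isCoboundedUnder_ge)

theorem abs_inv_sq_mul_le (hbound : ∀ t, 0 < t → |m t| ≤ B * t ^ 2) {t : ℝ} (ht : 0 < t) :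
    |(t ^ 2)⁻¹ * m t| ≤ B := by
  rw [abs_mul, abs_inv, abs_of_pos (by positivity), inv_mul_le_iff₀ (by positivity), mul_comm]
  exact hbound t ht

theorem inv_sq_mul_le_inv_sq_mul_add (hbound : ∀ t, 0 < t → |m t| ≤ B * t ^ 2)
    (hmono : ∀ s t, 0 < s → s ≤ t → m t ≤ m s + B * (t ^ 2 - s ^ 2)) {s t : ℝ} (hs : 0 < s)
    (hst : s ≤ t) : (t ^ 2)⁻¹ * m t ≤ (s ^ 2)⁻¹ * m s + 2 * B * (t ^ 2 - s ^ 2) / t ^ 2 := by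
  have hs2 : 0 < s ^ 2 := by positivity
  have ht2 : 0 < t ^ 2 := pow_pos (hs.trans_le hst) 2
  have hd : 0 ≤ t ^ 2 - s ^ 2 := sub_nonneg.2 (pow_le_pow_left₀ hs.le hst 2)
  set q := (s ^ 2)⁻¹ * m s
  have hq : |q| ≤ B := abs_inv_sq_mul_le hbound hs
  have hms : m s = s ^ 2 * q := by simp only [q]; field_simp
  rw [inv_mul_le_iff₀ ht2, mul_add, mul_div_cancel₀ _ ht2.ne']
  nlinarith [hmono s t hs hst, abs_le.1 hq]

theorem inv_sq_mul_le_of_tiling (hbound : ∀ t, 0 < t → |m t| ≤ B * t ^ 2)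
    (hmono : ∀ s t, 0 < s → s ≤ t → m t ≤ m s + B * (t ^ 2 - s ^ 2))
    (htile : ∀ u k : ℕ, m (k * (2 * u)) ≤ k ^ 2 * m (2 * u)) {u : ℕ} (hu : 0 < u) {t : ℝ}
    (ht : 2 * (u : ℝ) ≤ t) :
    (t ^ 2)⁻¹ * m t ≤ ((2 * (u : ℝ)) ^ 2)⁻¹ * m (2 * u) + 8 * B * u / t := by
  set N : ℝ := 2 * u
  have hN : 0 < N := by have : (0 : ℝ) < u := Nat.cast_pos.2 hu; positivity
  have ht0 : 0 < t := hN.trans_le ht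
  have hB : 0 ≤ B := (abs_nonneg _).trans (abs_inv_sq_mul_le hbound one_pos)
  set k := ⌊t / N⌋₊
  have hk : (1 : ℝ) ≤ k := by
    exact_mod_cast Nat.le_floor (by rw [Nat.cast_one, le_div_iff₀ hN]; linarith)
  have hkt : k * N ≤ t := (le_div_iff₀ hN).1 (Nat.floor_le (by positivity))
  have htk : t < k * N + N := by
    have := (div_lt_iff₀ hN).1 (Nat.lt_floor_add_one (t / N))
    linarith
  have hkN : 0 < k * N := by positivity
  have hcoarse : ((k * N) ^ 2)⁻¹ * m (k * N) ≤ (N ^ 2)⁻¹ * m N :=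
    calc ((k * N) ^ 2)⁻¹ * m (k * N) ≤ ((k * N) ^ 2)⁻¹ * (k ^ 2 * m N) :=
          mul_le_mul_of_nonneg_left (htile u k) (by positivity)
      _ = (N ^ 2)⁻¹ * m N := by field_simp
  have hgap : 2 * B * (t ^ 2 - (k * N) ^ 2) / t ^ 2 ≤ 8 * B * u / t := by
    rw [div_le_div_iff₀ (by positivity) ht0]
    have : t ^ 2 - (k * N) ^ 2 ≤ 2 * N * t := by nlinarith
    nlinarith [mul_le_mul_of_nonneg_left this hB]
  linarith [inv_sq_mul_le_inv_sq_mul_add hbound hmono hkN hkt]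

theorem inv_sq_mul_le_inv_sq_mul_add_div (hbound : ∀ t, 0 < t → |m t| ≤ B * t ^ 2)
    (hmono : ∀ s t, 0 < s → s ≤ t → m t ≤ m s + B * (t ^ 2 - s ^ 2)) {s t : ℝ} (hs : 1 ≤ s)
    (hst : s ≤ t) (hts : t ≤ s + 2) : (t ^ 2)⁻¹ * m t ≤ (s ^ 2)⁻¹ * m s + 8 * B / s := by
  have hB : 0 ≤ B := (abs_nonneg _).trans (abs_inv_sq_mul_le hbound one_pos)
  have ht : 0 < t := by linarith
  have hgap : 2 * B * (t ^ 2 - s ^ 2) / t ^ 2 ≤ 8 * B / s := by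
    have h : (t ^ 2 - s ^ 2) * s ≤ 4 * t ^ 2 :=
      calc (t ^ 2 - s ^ 2) * s = (t - s) * ((t + s) * s) := by ring
        _ ≤ 2 * (2 * t * t) :=
            mul_le_mul (by linarith) (by nlinarith) (by positivity) (by norm_num)
        _ = 4 * t ^ 2 := by ring
    rw [div_le_div_iff₀ (by positivity) (by linarith)]
    nlinarith [mul_le_mul_of_nonneg_left h hB]
  linarith [inv_sq_mul_le_inv_sq_mul_add hbound hmono (by linarith) hst]

theorem exists_tendsto_inv_sq_mul (hbound : ∀ t, 0 < t → |m t| ≤ B * t ^ 2)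
    (hmono : ∀ s t, 0 < s → s ≤ t → m t ≤ m s + B * (t ^ 2 - s ^ 2))
    (htile : ∀ u k : ℕ, m (k * (2 * u)) ≤ k ^ 2 * m (2 * u)) :
    ∃ L, Tendsto (fun t => (t ^ 2)⁻¹ * m t) atTop (𝓝 L) := by
  set g := fun t : ℝ => (t ^ 2)⁻¹ * m t
  have hg : ∀ t, 0 < t → |g t| ≤ B := fun t ht => abs_inv_sq_mul_le hbound ht
  have hle : IsBoundedUnder (· ≤ ·) atTop g :=
    isBoundedUnder_of_eventually_le
      ((eventually_gt_atTop 0).mono fun t ht => (abs_le.1 (hg t ht)).2)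
  have hge : IsBoundedUnder (· ≥ ·) atTop g :=
    isBoundedUnder_of_eventually_ge
      ((eventually_gt_atTop 0).mono fun t ht => (abs_le.1 (hg t ht)).1)
  have hlimsup : ∀ s, 1 ≤ s → limsup g atTop ≤ g s + 8 * B / s := by
    intro s hs
    set u := ⌈s / 2⌉₊
    have hsu : s ≤ 2 * u := by linarith [Nat.le_ceil (s / 2)]
    have hus : 2 * (u : ℝ) < s + 2 := by linarith [Nat.ceil_lt_add_one (by positivity : 0 ≤ s / 2)]
    have hu : 0 < u := (Nat.cast_pos (α := ℝ)).1 (by linarith)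
    have hgu : g (2 * u) ≤ g s + 8 * B / s :=
      inv_sq_mul_le_inv_sq_mul_add_div hbound hmono hs hsu (by linarith)
    refine (limsup_le_of_eventually_le_add_div (D := 8 * B * u) hge ?_).trans hgu
    filter_upwards [eventually_ge_atTop (2 * (u : ℝ))] with t ht
    exact inv_sq_mul_le_of_tiling hbound hmono htile hu ht
  have hls : limsup g atTop ≤ liminf g atTop :=
    le_liminf_of_eventually_le_add_div hle ((eventually_ge_atTop 1).mono hlimsup)
  exact ⟨_, tendsto_of_liminf_eq_limsup (le_antisymm (liminf_le_limsup hle hge) hls) rfl hle hge⟩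

end Asymptotics

theorem frobNorm_nonneg {m n : ℕ} (ξ : Matrix (Fin m) (Fin n) ℝ) : 0 ≤ frobNorm ξ :=
  Real.sqrt_nonneg _

theorem abs_entry_le_frobNorm {m n : ℕ} (ξ : Matrix (Fin m) (Fin n) ℝ) (i : Fin m) (j : Fin n) :
    |ξ i j| ≤ frobNorm ξ := by
  rw [← Real.sqrt_sq_eq_abs]
  refine Real.sqrt_le_sqrt ?_
  calc ξ i j ^ 2 ≤ ∑ j', ξ i j' ^ 2 :=
        Finset.single_le_sum (f := fun j' => ξ i j' ^ 2) (fun _ _ => sq_nonneg _)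
          (Finset.mem_univ j)
    _ ≤ ∑ i', ∑ j', ξ i' j' ^ 2 :=
        Finset.single_le_sum (f := fun i' => ∑ j', ξ i' j' ^ 2)
          (fun _ _ => Finset.sum_nonneg fun _ _ => sq_nonneg _) (Finset.mem_univ i)

theorem frobNorm_le_of_abs_entry_le {m n : ℕ} {ξ : Matrix (Fin m) (Fin n) ℝ} {a : ℝ} (ha : 0 ≤ a)
    (h : ∀ i j, |ξ i j| ≤ a) : frobNorm ξ ≤ Real.sqrt (m * n) * a := by
  have hsum : ∑ i, ∑ j, ξ i j ^ 2 ≤ ∑ _i : Fin m, ∑ _j : Fin n, a ^ 2 :=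
    Finset.sum_le_sum fun i _ => Finset.sum_le_sum fun j _ => by
      rw [← sq_abs]; exact pow_le_pow_left₀ (abs_nonneg _) (h i j) 2
  calc frobNorm ξ ≤ Real.sqrt (m * n * a ^ 2) := by
        refine Real.sqrt_le_sqrt (hsum.trans_eq ?_)
        simp only [Finset.sum_const, Finset.card_univ, Fintype.card_fin, nsmul_eq_mul]
        ring
    _ = Real.sqrt (m * n) * a := by
        rw [Real.sqrt_mul (by positivity), Real.sqrt_sq ha]

theorem max_neg_min_eq_self {r u : ℝ} (h : |u| ≤ r) : max (-r) (min u r) = u := by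
  rw [abs_le] at h
  rw [min_eq_left h.2, max_eq_right h.1]

theorem abs_max_neg_min_le {r : ℝ} (hr : 0 ≤ r) (u : ℝ) : |max (-r) (min u r)| ≤ r :=
  abs_le.2 ⟨le_max_left _ _, max_le (by linarith) (min_le_right _ _)⟩

theorem abs_max_neg_min_eq {r u : ℝ} (hr : 0 ≤ r) (h : r ≤ |u|) : |max (-r) (min u r)| = r := by
  rcases le_abs'.1 h with hu | hu
  · rw [min_eq_left (by linarith), max_eq_left hu, abs_neg, abs_of_nonneg hr]
  · rw [min_eq_right hu, max_eq_right (by linarith), abs_of_nonneg hr]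

namespace CellProblem

theorem withCol_apply_eq_add (ξα : M32) (A : M33) (i j : Fin 3) :
    withCol ξα A i j = withCol ξα 0 i j + A i j := by
  simp [withCol]

theorem abs_gradm_le {K : NNReal} {φ : V3 → V3} (hφ : LipschitzWith K φ) (x : V3) (i j : Fin 3) :
    |gradm φ x i j| ≤ K := by
  calc |gradm φ x i j| ≤ ‖fderiv ℝ φ x (Pi.single j 1)‖ := by
        rw [← Real.norm_eq_abs]; exact norm_le_pi_norm _ i
    _ ≤ ‖fderiv ℝ φ x‖ * ‖(Pi.single j 1 : V3)‖ := (fderiv ℝ φ x).le_opNorm _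
    _ ≤ K := by
        rw [Pi.norm_single, norm_one, mul_one]; exact norm_fderiv_le_of_lipschitz ℝ hφ

theorem frobNorm_withCol_gradm_le (ξα : M32) {K : NNReal} {φ : V3 → V3}
    (hφ : LipschitzWith K φ) (x : V3) :
    frobNorm (withCol ξα (gradm φ x)) ≤ 3 * (frobNorm (withCol ξα 0) + K) := by
  have h := frobNorm_le_of_abs_entry_le (ξ := withCol ξα (gradm φ x))
    (add_nonneg (frobNorm_nonneg _) K.2) fun i j => by
      rw [withCol_apply_eq_add]
      exact (abs_add_le _ _).trans
        (add_le_add (abs_entry_le_frobNorm _ i j) (abs_gradm_le hφ x i j))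
  rwa [show ((3 : ℕ) : ℝ) * (3 : ℕ) = 3 ^ 2 by norm_num, Real.sqrt_sq (by norm_num)] at h

theorem gradm_congr_of_eqOn {f g : V3 → V3} {U : Set V3} (hU : IsOpen U) (hfg : EqOn f g U)
    {x : V3} (hx : x ∈ U) : gradm f x = gradm g x := by
  rw [gradm, gradm, (eventuallyEq_of_mem (hU.mem_nhds hx) hfg).fderiv_eq]

theorem gradm_comp_sub (φ : V3 → V3) (c x : V3) :
    gradm (fun y => φ (y - c)) x = gradm φ (x - c) := by
  rw [gradm, gradm, fderiv_comp_sub]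

theorem gradm_zero (x : V3) : gradm 0 x = 0 := by
  ext i j
  simp [gradm]

def cellIntegrand (W : V3 → M33 → ℝ) (ξα : M32) (φ : V3 → V3) (x : V3) : ℝ :=
  W x (withCol ξα (gradm φ x))

theorem cellE_eq_integral (W : V3 → M33 → ℝ) (ξα : M32) (t : ℝ) (φ : V3 → V3) :
    cellE W ξα t φ = ∫ x in openCyl t, cellIntegrand W ξα φ x := rfl

theorem measurable_cellIntegrand {W : V3 → M33 → ℝ} (hW : Caratheodory W) (ξα : M32)
    (φ : V3 → V3) : Measurable (cellIntegrand W ξα φ) := by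
  have hgrad : Measurable (β := Fin 3 → Fin 3 → ℝ) fun x => withCol ξα (gradm φ x) :=
    measurable_pi_lambda _ fun i => measurable_pi_lambda _ fun j =>
      ((measurable_pi_apply i).comp
        (measurable_fderiv_apply_const ℝ φ (Pi.single j (1 : ℝ)))).const_add _
  -- `by exact` lets `hW.2`, stated for the matrix topology, serve on the product space
  have hW' : Measurable (Function.uncurry fun (ξ : Fin 3 → Fin 3 → ℝ) (x : V3) => W x ξ) :=
    measurable_uncurry_of_continuous_of_measurable (fun x => by exact hW.2 x) hW.1
  exact hW'.comp (hgrad.prodMk measurable_id)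

structure IsTameIntegrand (W : V3 → M33 → ℝ) (a : ℝ) : Prop where
  caratheodory : Caratheodory W
  le_apply : ∀ x ξ, a ≤ W x ξ
  exists_le_of_frobNorm_le : ∀ R, ∃ M, ∀ x ξ, frobNorm ξ ≤ R → W x ξ ≤ M

theorem IsTameIntegrand.integrableOn {W : V3 → M33 → ℝ} {a : ℝ} (hW : IsTameIntegrand W a)
    (ξα : M32) {K : NNReal} {φ : V3 → V3} (hφ : LipschitzWith K φ) {S : Set V3}
    (hS : volume S ≠ ⊤) :
    IntegrableOn (cellIntegrand W ξα φ) S := by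
  obtain ⟨M, hM⟩ := hW.exists_le_of_frobNorm_le (3 * (frobNorm (withCol ξα 0) + K))
  refine Measure.integrableOn_of_bounded (M := max |a| |M|) hS
    (measurable_cellIntegrand hW.caratheodory ξα φ).aestronglyMeasurable
    (Eventually.of_forall fun x => ?_)
  rw [Real.norm_eq_abs]
  exact abs_le_max_abs_abs (hW.le_apply _ _) (hM _ _ (frobNorm_withCol_gradm_le ξα hφ x))

theorem isTameIntegrand_of_growth {Φ : ℝ → ℝ} (hΦ : IsYoung Φ) {W : V3 → M33 → ℝ}
    (hW : Caratheodory W) {β' β : ℝ} (hβ' : 0 < β')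
    (hWg : ∀ x ξ, β' * Φ (frobNorm ξ) - 1 / β' ≤ W x ξ ∧ W x ξ ≤ β * (1 + Φ (frobNorm ξ))) :
    IsTameIntegrand W (-(1 / β')) where
  caratheodory := hW
  le_apply x ξ := by
    linarith [(hWg x ξ).1, mul_nonneg hβ'.le (hΦ.nonneg (frobNorm_nonneg ξ))]
  exists_le_of_frobNorm_le R := by
    obtain ⟨M, hM⟩ := hΦ.exists_le R
    refine ⟨|β| * (1 + M), fun x ξ hξ => (hWg x ξ).2.trans ?_⟩
    have h0 : 0 ≤ Φ (frobNorm ξ) := hΦ.nonneg (frobNorm_nonneg ξ)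
    calc β * (1 + Φ (frobNorm ξ)) ≤ |β| * (1 + Φ (frobNorm ξ)) :=
          mul_le_mul_of_nonneg_right (le_abs_self β) (by linarith)
      _ ≤ |β| * (1 + M) := by
          gcongr
          exact hM _ (frobNorm_nonneg ξ) hξ

theorem openCyl_eq_pi (t : ℝ) :
    openCyl t = univ.pi fun i : Fin 3 =>
      if i = 2 then Ioo (-(1 / 2)) (1 / 2) else Ioo (-(t / 2)) (t / 2) := by
  ext x
  simp [openCyl, Fin.forall_fin_succ, abs_lt, and_assoc]

theorem isOpen_openCyl (t : ℝ) : IsOpen (openCyl t) := by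
  rw [openCyl_eq_pi]
  exact isOpen_set_pi finite_univ fun i _ => by split_ifs <;> exact isOpen_Ioo

theorem convex_openCyl (t : ℝ) : Convex ℝ (openCyl t) := by
  rw [openCyl_eq_pi]
  exact convex_pi fun i _ => by split_ifs <;> exact convex_Ioo _ _

theorem volume_real_openCyl {t : ℝ} (ht : 0 ≤ t) : volume.real (openCyl t) = t ^ 2 := by
  rw [measureReal_def, openCyl_eq_pi, volume_pi_pi, Fin.prod_univ_three]
  simp [ENNReal.toReal_mul, ht]
  ring

theorem volume_openCyl_ne_top (t : ℝ) : volume (openCyl t) ≠ ⊤ := by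
  rw [openCyl_eq_pi, volume_pi_pi]
  exact ENNReal.prod_ne_top fun i _ => by split_ifs <;> simp

theorem openCyl_subset_openCyl {s t : ℝ} (hst : s ≤ t) : openCyl s ⊆ openCyl t :=
  fun _ ⟨h0, h1, h2⟩ => ⟨by linarith, by linarith, h2⟩

theorem zero_mem_admSet (t : ℝ) : (0 : V3 → V3) ∈ AdmSet t :=
  ⟨⟨0, LipschitzWith.const 0⟩, fun _ _ => rfl⟩

variable {W : V3 → M33 → ℝ} {a : ℝ} {ξα : M32}

theorem cellE_zero_le (hW : IsTameIntegrand W a) {c₀ : ℝ} (hup : ∀ x, W x (withCol ξα 0) ≤ c₀)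
    {t : ℝ} (ht : 0 ≤ t) : cellE W ξα t 0 ≤ c₀ * t ^ 2 := by
  have hint := hW.integrableOn ξα (LipschitzWith.const (0 : V3)) (volume_openCyl_ne_top t)
  calc cellE W ξα t 0 ≤ ∫ _ in openCyl t, c₀ :=
        setIntegral_mono_on hint (integrableOn_const (volume_openCyl_ne_top t))
          (isOpen_openCyl t).measurableSet fun x _ => by
            simpa [cellIntegrand, gradm_zero] using hup x
    _ = c₀ * t ^ 2 := by rw [setIntegral_const, volume_real_openCyl ht, smul_eq_mul, mul_comm]

theorem mul_sq_le_cellE (hW : IsTameIntegrand W a) {t : ℝ} (ht : 0 ≤ t) {φ : V3 → V3}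
    (hφ : φ ∈ AdmSet t) : a * t ^ 2 ≤ cellE W ξα t φ := by
  obtain ⟨K, hK⟩ := hφ.1
  rw [← volume_real_openCyl ht]
  exact setIntegral_ge_of_const_le_real (isOpen_openCyl t).measurableSet
    (volume_openCyl_ne_top t) (fun x _ => hW.le_apply _ _)
    (hW.integrableOn ξα hK (volume_openCyl_ne_top t))

theorem le_mul_cellInf_add {s x k b : ℝ} (hk : 0 ≤ k)
    (h : ∀ φ ∈ AdmSet s, x ≤ k * cellE W ξα s φ + b) :
    x ≤ k * cellInf W ξα s (AdmSet s) + b :=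
  le_mul_csInf_add (S := (fun φ => cellE W ξα s φ) '' AdmSet s) ⟨_, 0, zero_mem_admSet s, rfl⟩ hk
    (by rintro _ ⟨φ, hφ, rfl⟩; exact h φ hφ)

theorem cellInf_le_cellE (hW : IsTameIntegrand W a) {t : ℝ} (ht : 0 ≤ t) {φ : V3 → V3}
    (hφ : φ ∈ AdmSet t) : cellInf W ξα t (AdmSet t) ≤ cellE W ξα t φ :=
  csInf_le ⟨a * t ^ 2, by rintro _ ⟨ψ, hψ, rfl⟩; exact mul_sq_le_cellE hW ht hψ⟩ ⟨φ, hφ, rfl⟩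

theorem abs_cellInf_le (hW : IsTameIntegrand W a) {c₀ : ℝ}
    (hup : ∀ x, W x (withCol ξα 0) ≤ c₀) {t : ℝ} (ht : 0 ≤ t) :
    |cellInf W ξα t (AdmSet t)| ≤ max c₀ (-a) * t ^ 2 := by
  have hlow : a * t ^ 2 ≤ cellInf W ξα t (AdmSet t) := by
    simpa using le_mul_cellInf_add (k := 1) (b := 0) zero_le_one
      fun φ hφ => by simpa using mul_sq_le_cellE (ξα := ξα) hW ht hφ
  have hup' : cellInf W ξα t (AdmSet t) ≤ c₀ * t ^ 2 :=
    (cellInf_le_cellE hW ht (zero_mem_admSet t)).trans (cellE_zero_le hW hup ht)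
  have ht2 : 0 ≤ t ^ 2 := by positivity
  rw [abs_le]
  constructor <;> nlinarith [le_max_left c₀ (-a), le_max_right c₀ (-a)]

def squareRetract (r : ℝ) (y : V3) : V3 := fun i => if i = 2 then y i else max (-r) (min (y i) r)

theorem lipschitzWith_squareRetract (r : ℝ) : LipschitzWith 1 (squareRetract r) := by
  have hclamp : LipschitzWith 1 fun u : ℝ => max (-r) (min u r) :=
    (LipschitzWith.id.min_const r).const_max (-r)
  refine LipschitzWith.of_dist_le_mul fun y z => ?_
  rw [NNReal.coe_one, one_mul, dist_pi_le_iff dist_nonneg]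
  intro i
  refine le_trans ?_ (dist_le_pi_dist y z i)
  unfold squareRetract
  split_ifs
  · exact le_rfl
  · simpa using hclamp.dist_le_mul (y i) (z i)

theorem squareRetract_of_abs_le {r : ℝ} {y : V3} (h0 : |y 0| ≤ r) (h1 : |y 1| ≤ r) :
    squareRetract r y = y := by
  funext i
  fin_cases i <;> simp [squareRetract, max_neg_min_eq_self, h0, h1]

theorem squareRetract_mem_latBdry {s : ℝ} (hs : 0 ≤ s) {y : V3} (h2 : |y 2| < 1 / 2)
    (h : s / 2 ≤ |y 0| ∨ s / 2 ≤ |y 1|) : squareRetract (s / 2) y ∈ latBdry s := by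
  have hr : 0 ≤ s / 2 := by linarith
  refine ⟨?_, by simpa [squareRetract] using h2⟩
  simp only [squareRetract, Fin.reduceEq, if_false]
  rcases h with h | h
  · rw [abs_max_neg_min_eq hr h]
    exact max_eq_left (abs_max_neg_min_le hr _)
  · rw [abs_max_neg_min_eq hr h]
    exact max_eq_right (abs_max_neg_min_le hr _)

def cell (s : ℝ) (c : V3) : Set V3 := (· - c) ⁻¹' openCyl s

theorem isOpen_cell (s : ℝ) (c : V3) : IsOpen (cell s c) :=
  (isOpen_openCyl s).preimage (continuous_id.sub continuous_const)

theorem convex_cell (s : ℝ) (c : V3) : Convex ℝ (cell s c) := by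
  simpa [cell, sub_eq_neg_add] using (convex_openCyl s).translate_preimage_right (-c)

theorem volume_real_cell {s : ℝ} (hs : 0 ≤ s) (c : V3) : volume.real (cell s c) = s ^ 2 := by
  rw [← volume_real_openCyl hs]
  simp [Measure.real, cell, sub_eq_add_neg, measure_preimage_add_right]

theorem disjoint_cell {s : ℝ} {c c' : V3} (h : s ≤ |c 0 - c' 0| ∨ s ≤ |c 1 - c' 1|) :
    Disjoint (cell s c) (cell s c') := by
  refine Set.disjoint_left.2 fun x ⟨h0, h1, _⟩ ⟨h0', h1', _⟩ => ?_
  simp only [Pi.sub_apply] at h0 h1 h0' h1'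
  rcases h with h | h
  · linarith [abs_sub_le (c 0) (x 0) (c' 0), abs_sub_comm (c 0) (x 0)]
  · linarith [abs_sub_le (c 1) (x 1) (c' 1), abs_sub_comm (c 1) (x 1)]

/-- The translate `φ (· - c)` on the cell centred at `c`, extended off the cell by its values on
the cell's lateral boundary, where it vanishes when `φ ∈ 𝒜_s`. -/
def patch (s : ℝ) (c : V3) (φ : V3 → V3) (x : V3) : V3 := φ (squareRetract (s / 2) (x - c))

theorem lipschitzWith_patch {K : NNReal} {φ : V3 → V3} (hφ : LipschitzWith K φ) (s : ℝ)
    (c : V3) : LipschitzWith K (patch s c φ) := by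
  have h := hφ.comp
    ((lipschitzWith_squareRetract (s / 2)).comp (IsometryEquiv.subRight c).isometry.lipschitz)
  rwa [one_mul, mul_one] at h

theorem patch_of_mem_cell {s : ℝ} {c x : V3} (φ : V3 → V3) (hx : x ∈ cell s c) :
    patch s c φ x = φ (x - c) := by
  obtain ⟨h0, h1, -⟩ := hx
  rw [patch, squareRetract_of_abs_le h0.le h1.le]

theorem patch_eq_zero {s : ℝ} (hs : 0 ≤ s) {φ : V3 → V3} (hφ : φ ∈ AdmSet s) {c x : V3}
    (hx2 : |x 2 - c 2| < 1 / 2) (hx : x ∉ cell s c) : patch s c φ x = 0 := by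
  refine hφ.2 _ (squareRetract_mem_latBdry hs hx2 ?_)
  by_contra! h
  exact hx ⟨h.1, h.2, hx2⟩

theorem ae_gradm_eq_zero {κ : Type*} [Finite κ] {U : Set V3} (hU : IsOpen U) {S : κ → Set V3}
    (hS : ∀ k, IsOpen (S k)) (hSc : ∀ k, Convex ℝ (S k)) {ψ : V3 → V3}
    (hψ : EqOn ψ 0 (U \ ⋃ k, S k)) : ∀ᵐ x, x ∈ U \ ⋃ k, S k → gradm ψ x = 0 := by
  -- Off the null frontiers of the convex sets `S k`, the set `U \ ⋃ k, S k` is open.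
  have hnull : volume (⋃ k, frontier (S k)) = 0 :=
    measure_iUnion_null fun k => (hSc k).addHaar_frontier volume
  have hO : IsOpen (U \ ⋃ k, closure (S k)) :=
    hU.sdiff (isClosed_iUnion_of_finite fun k => isClosed_closure)
  filter_upwards [measure_eq_zero_iff_ae_notMem.1 hnull] with x hxN hx
  have hxO : x ∈ U \ ⋃ k, closure (S k) := by
    refine ⟨hx.1, fun hcl => hxN ?_⟩
    obtain ⟨k, hk⟩ := mem_iUnion.1 hcl
    exact mem_iUnion.2 ⟨k, (hS k).frontier_eq ▸ ⟨hk, fun h => hx.2 (mem_iUnion.2 ⟨k, h⟩)⟩⟩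
  rw [gradm_congr_of_eqOn hO
    (hψ.mono (sdiff_subset_sdiff_right (iUnion_mono fun k => subset_closure)))
    hxO, gradm_zero]

theorem setIntegral_cell_eq_cellE {s : ℝ} {c : V3} (hper : ∀ x ξ, W (x + c) ξ = W x ξ)
    {ψ φ : V3 → V3} (hψ : EqOn ψ (fun y => φ (y - c)) (cell s c)) :
    ∫ x in cell s c, cellIntegrand W ξα ψ x = cellE W ξα s φ := by
  have hcongr : EqOn (cellIntegrand W ξα ψ) (fun x => cellIntegrand W ξα φ (x - c)) (cell s c) := by
    intro x hx
    simp only [cellIntegrand]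
    rw [gradm_congr_of_eqOn (isOpen_cell s c) hψ hx, gradm_comp_sub, ← hper (x - c), sub_add_cancel]
  rw [setIntegral_congr_fun (isOpen_cell s c).measurableSet hcongr]
  exact (measurePreserving_sub_right volume c).setIntegral_preimage_emb
    (MeasurableEquiv.subRight c).measurableEmbedding _ _

section Tiling

variable {ι : Type*} [Fintype ι] {s t : ℝ} {c : ι → V3} {φ : V3 → V3}

def tiledMap (s : ℝ) (c : ι → V3) (φ : V3 → V3) (x : V3) : V3 := ∑ i, patch s (c i) φ x

theorem tiledMap_of_mem_cell (hs : 0 ≤ s) (hφ : φ ∈ AdmSet s) (hc2 : ∀ i, c i 2 = 0)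
    (hdisj : Pairwise fun i j => Disjoint (cell s (c i)) (cell s (c j))) {i : ι} {x : V3}
    (hx : x ∈ cell s (c i)) : tiledMap s c φ x = φ (x - c i) := by
  classical
  rw [tiledMap, Finset.sum_eq_single i (fun j _ hji => ?_) (by simp), patch_of_mem_cell φ hx]
  refine patch_eq_zero hs hφ ?_ (Set.disjoint_left.1 (hdisj hji.symm) hx)
  simpa [hc2] using hx.2.2

theorem tiledMap_eq_zero (hs : 0 ≤ s) (hφ : φ ∈ AdmSet s) (hc2 : ∀ i, c i 2 = 0) {x : V3}
    (hx2 : |x 2| < 1 / 2) (hx : ∀ i, x ∉ cell s (c i)) : tiledMap s c φ x = 0 :=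
  Finset.sum_eq_zero fun i _ => patch_eq_zero hs hφ (by simpa [hc2] using hx2) (hx i)

theorem tiledMap_mem_admSet (hs : 0 ≤ s) (hφ : φ ∈ AdmSet s) (hc2 : ∀ i, c i 2 = 0)
    (hsub : ∀ i, cell s (c i) ⊆ openCyl t) : tiledMap s c φ ∈ AdmSet t := by
  obtain ⟨K, hK⟩ := hφ.1
  refine ⟨⟨_, LipschitzWith.finset_sum _ fun i _ => lipschitzWith_patch hK s (c i)⟩,
    fun x hx => tiledMap_eq_zero hs hφ hc2 hx.2 fun i hi => ?_⟩
  obtain ⟨h0, h1, -⟩ := hsub i hi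
  exact (max_lt h0 h1).ne hx.1

theorem volume_real_openCyl_sdiff_cells (hs : 0 ≤ s) (ht : 0 ≤ t)
    (hdisj : Pairwise fun i j => Disjoint (cell s (c i)) (cell s (c j)))
    (hsub : ∀ i, cell s (c i) ⊆ openCyl t) :
    volume.real (openCyl t \ ⋃ i, cell s (c i)) = t ^ 2 - Fintype.card ι * s ^ 2 := by
  have hfin : ∀ S ⊆ openCyl t, volume S ≠ ⊤ := fun S hS =>
    measure_ne_top_of_subset hS (volume_openCyl_ne_top t)
  have h := volume_real_openCyl ht
  rw [← union_sdiff_cancel (iUnion_subset hsub), measureReal_union disjoint_sdiff_right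
      ((isOpen_openCyl t).measurableSet.diff
        (MeasurableSet.iUnion fun i => (isOpen_cell s (c i)).measurableSet))
      (hfin _ (iUnion_subset hsub)) (hfin _ sdiff_subset),
    measureReal_iUnion_fintype hdisj (fun i => (isOpen_cell s (c i)).measurableSet)
      (fun i => hfin _ (hsub i))] at h
  simp only [volume_real_cell hs, Finset.sum_const, Finset.card_univ, nsmul_eq_mul] at h
  linarith

/-- Off the cells the tiled map vanishes, so there, away from the null frontiers of the cells, the
integrand is that of the zero map. -/
theorem cellE_tiledMap_le (hW : IsTameIntegrand W a) {c₀ : ℝ}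
    (hup : ∀ x, W x (withCol ξα 0) ≤ c₀) (hs : 0 ≤ s) (ht : 0 ≤ t) (hφ : φ ∈ AdmSet s)
    (hc2 : ∀ i, c i 2 = 0) (hdisj : Pairwise fun i j => Disjoint (cell s (c i)) (cell s (c j)))
    (hsub : ∀ i, cell s (c i) ⊆ openCyl t) (hper : ∀ i x ξ, W (x + c i) ξ = W x ξ) :
    cellE W ξα t (tiledMap s c φ) ≤
      Fintype.card ι * cellE W ξα s φ + c₀ * (t ^ 2 - Fintype.card ι * s ^ 2) := by
  set ψ := tiledMap s c φ
  set D := openCyl t \ ⋃ i, cell s (c i)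
  have hcells : MeasurableSet (⋃ i, cell s (c i)) :=
    MeasurableSet.iUnion fun i => (isOpen_cell s (c i)).measurableSet
  have hDmeas : MeasurableSet D := (isOpen_openCyl t).measurableSet.diff hcells
  have hU : openCyl t = (⋃ i, cell s (c i)) ∪ D := (union_sdiff_cancel (iUnion_subset hsub)).symm
  obtain ⟨K, hK⟩ := (tiledMap_mem_admSet hs hφ hc2 hsub).1
  have hint : ∀ S ⊆ openCyl t, IntegrableOn (cellIntegrand W ξα ψ) S := fun S hS =>
    (hW.integrableOn ξα hK (volume_openCyl_ne_top t)).mono_set hS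
  have hfin : ∀ S ⊆ openCyl t, volume S ≠ ⊤ := fun S hS =>
    measure_ne_top_of_subset hS (volume_openCyl_ne_top t)
  have hcell : ∀ i, ∫ x in cell s (c i), cellIntegrand W ξα ψ x = cellE W ξα s φ := fun i =>
    setIntegral_cell_eq_cellE (hper i) fun x hx => tiledMap_of_mem_cell hs hφ hc2 hdisj hx
  have hD : ∫ x in D, cellIntegrand W ξα ψ x ≤ c₀ * (t ^ 2 - Fintype.card ι * s ^ 2) := by
    have hgrad := ae_gradm_eq_zero (isOpen_openCyl t) (fun i => isOpen_cell s (c i))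
      (fun i => convex_cell s (c i)) (ψ := ψ) fun x hx =>
        tiledMap_eq_zero hs hφ hc2 hx.1.2.2 fun i hi => hx.2 (mem_iUnion.2 ⟨i, hi⟩)
    calc ∫ x in D, cellIntegrand W ξα ψ x ≤ ∫ _ in D, c₀ :=
          setIntegral_mono_on_ae (hint D sdiff_subset) (integrableOn_const (hfin D sdiff_subset))
            hDmeas (by
              filter_upwards [hgrad] with x hx hxD
              rw [cellIntegrand, hx hxD]
              exact hup x)
      _ = c₀ * (t ^ 2 - Fintype.card ι * s ^ 2) := by
          rw [setIntegral_const, volume_real_openCyl_sdiff_cells hs ht hdisj hsub, smul_eq_mul,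
            mul_comm]
  rw [cellE_eq_integral, hU, setIntegral_union disjoint_sdiff_right hDmeas
      (hint _ (iUnion_subset hsub)) (hint _ sdiff_subset),
    integral_iUnion_fintype (fun i => (isOpen_cell s (c i)).measurableSet) hdisj
      (fun i => hint _ (hsub i)), Finset.sum_congr rfl fun i _ => hcell i, Finset.sum_const,
    Finset.card_univ, nsmul_eq_mul]
  linarith

end Tiling

variable {c₀ : ℝ}

theorem cellInf_le_of_tiling {ι : Type*} [Fintype ι] {s t : ℝ} {c : ι → V3}
    (hW : IsTameIntegrand W a) (hup : ∀ x, W x (withCol ξα 0) ≤ c₀) (hs : 0 ≤ s) (ht : 0 ≤ t)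
    (hc2 : ∀ i, c i 2 = 0) (hdisj : Pairwise fun i j => Disjoint (cell s (c i)) (cell s (c j)))
    (hsub : ∀ i, cell s (c i) ⊆ openCyl t) (hper : ∀ i x ξ, W (x + c i) ξ = W x ξ) :
    cellInf W ξα t (AdmSet t) ≤
      Fintype.card ι * cellInf W ξα s (AdmSet s) + c₀ * (t ^ 2 - Fintype.card ι * s ^ 2) :=
  le_mul_cellInf_add (Nat.cast_nonneg _) fun _ hφ =>
    (cellInf_le_cellE hW ht (tiledMap_mem_admSet hs hφ hc2 hsub)).trans
      (cellE_tiledMap_le hW hup hs ht hφ hc2 hdisj hsub hper)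

theorem cellInf_le_cellInf_add (hW : IsTameIntegrand W a) (hup : ∀ x, W x (withCol ξα 0) ≤ c₀)
    {s t : ℝ} (hs : 0 ≤ s) (hst : s ≤ t) :
    cellInf W ξα t (AdmSet t) ≤ cellInf W ξα s (AdmSet s) + c₀ * (t ^ 2 - s ^ 2) := by
  have hcell : cell s 0 = openCyl s := by ext x; simp [cell]
  simpa using cellInf_le_of_tiling (ι := Unit) (c := fun _ => 0) hW hup hs (hs.trans hst)
    (fun _ => rfl) (Subsingleton.pairwise) (fun _ => hcell ▸ openCyl_subset_openCyl hst)
    (fun _ x ξ => by rw [add_zero])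

/-- Coordinates of the centres of a `k × k` grid of squares of side `2u` tiling `(-ku, ku)²`. -/
def gridCoord (u k : ℕ) (j : Fin k) : ℝ := u * (2 * j - k + 1)

theorem le_abs_gridCoord_sub {u k : ℕ} {j j' : Fin k} (h : j ≠ j') :
    2 * (u : ℝ) ≤ |gridCoord u k j - gridCoord u k j'| := by
  have hjj : (1 : ℝ) ≤ |(j : ℝ) - j'| := by
    rcases lt_or_gt_of_ne (Fin.val_ne_of_ne h) with h | h
    · have : (j : ℝ) + 1 ≤ j' := by exact_mod_cast h
      rw [abs_sub_comm, abs_of_nonneg (by linarith)]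
      linarith
    · have : (j' : ℝ) + 1 ≤ j := by exact_mod_cast h
      rw [abs_of_nonneg (by linarith)]
      linarith
  have hu : (0 : ℝ) ≤ u := u.cast_nonneg
  rw [show gridCoord u k j - gridCoord u k j' = 2 * u * (j - j') by simp only [gridCoord]; ring,
    abs_mul, abs_of_nonneg (by positivity)]
  nlinarith

theorem abs_gridCoord_le (u k : ℕ) (j : Fin k) : |gridCoord u k j| ≤ u * (k - 1) := by
  have hj : (j : ℝ) + 1 ≤ k := by exact_mod_cast j.isLt
  have hu : (0 : ℝ) ≤ u := u.cast_nonneg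
  rw [gridCoord, abs_mul, abs_of_nonneg hu]
  exact mul_le_mul_of_nonneg_left (abs_le.2 ⟨by linarith [(j : ℕ).cast_nonneg (α := ℝ)],
    by linarith⟩) hu

theorem gridCoord_eq_intCast (u k : ℕ) (j : Fin k) :
    gridCoord u k j = ((u * (2 * j - k + 1) : ℤ) : ℝ) := by
  simp [gridCoord]

def gridCenter (u k : ℕ) (p : Fin k × Fin k) : V3 := ![gridCoord u k p.1, gridCoord u k p.2, 0]

theorem cellInf_grid_le (hW : IsTameIntegrand W a) (hup : ∀ x, W x (withCol ξα 0) ≤ c₀)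
    (hWper : H1per W) (u k : ℕ) :
    cellInf W ξα (k * (2 * u)) (AdmSet (k * (2 * u))) ≤
      k ^ 2 * cellInf W ξα (2 * u) (AdmSet (2 * u)) := by
  have hdisj : Pairwise fun p q =>
      Disjoint (cell (2 * u) (gridCenter u k p)) (cell (2 * u) (gridCenter u k q)) := by
    intro p q hpq
    refine disjoint_cell ?_
    rcases not_and_or.1 (fun h => hpq (Prod.ext h.1 h.2)) with h | h
    · exact Or.inl (le_abs_gridCoord_sub h)
    · exact Or.inr (le_abs_gridCoord_sub h)
  have hsub : ∀ p, cell (2 * u) (gridCenter u k p) ⊆ openCyl (k * (2 * u)) := by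
    rintro p x ⟨h0, h1, h2⟩
    simp only [gridCenter, Pi.sub_apply, Matrix.cons_val] at h0 h1 h2
    refine ⟨?_, ?_, by simpa using h2⟩
    · linarith [abs_sub_abs_le_abs_sub (x 0) (gridCoord u k p.1), abs_gridCoord_le u k p.1]
    · linarith [abs_sub_abs_le_abs_sub (x 1) (gridCoord u k p.2), abs_gridCoord_le u k p.2]
  have hper : ∀ p x ξ, W (x + gridCenter u k p) ξ = W x ξ := fun p x ξ => by
    rw [gridCenter, gridCoord_eq_intCast, gridCoord_eq_intCast]
    exact hWper.apply_add_int _ _ x ξ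
  have h := cellInf_le_of_tiling hW hup (by positivity) (by positivity) (fun _ => rfl) hdisj hsub
    hper
  simp only [Fintype.card_prod, Fintype.card_fin, Nat.cast_mul] at h
  linarith

end CellProblem

theorem stmt_2_general
    (Φ : ℝ → ℝ) (hΦ : IsYoung Φ)
    (W : V3 → M33 → ℝ) (hW : Caratheodory W) (hWper : H1per W)
    (β' β : ℝ) (hβ' : 0 < β')
    (hWg : ∀ x ξ, β' * Φ (frobNorm ξ) - 1 / β' ≤ W x ξ ∧ W x ξ ≤ β * (1 + Φ (frobNorm ξ)))
    (ξα : M32) :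
    ∃ L : ℝ, Tendsto (fun t : ℝ => (t ^ 2)⁻¹ * cellInf W ξα t (AdmSet t)) atTop (nhds L) := by
  have hT := CellProblem.isTameIntegrand_of_growth hΦ hW hβ' hWg
  have hup : ∀ x, W x (withCol ξα 0) ≤ β * (1 + Φ (frobNorm (withCol ξα 0))) :=
    fun x => (hWg x _).2
  refine exists_tendsto_inv_sq_mul (fun t ht => CellProblem.abs_cellInf_le hT hup ht.le)
    (fun s t hs hst => ?_) (CellProblem.cellInf_grid_le hT hup hWper)
  refine (CellProblem.cellInf_le_cellInf_add hT hup hs.le hst).trans (add_le_add le_rfl ?_)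
  exact mul_le_mul_of_nonneg_right (le_max_left _ _) (sub_nonneg.2 (pow_le_pow_left₀ hs.le hst 2))

/-- the limit defining the homogenized density exists (liminf = limsup)
and is a finite real number. -/
theorem stmt_2
    (Φ : ℝ → ℝ) (hΦ : IsYoung Φ) (hΔ : Delta2 Φ) (hΝ : Nabla2 Φ)
    (W : V3 → M33 → ℝ) (hW : Caratheodory W) (hWper : H1per W)
    (β' β : ℝ) (hβ' : 0 < β') (hββ : β' < β)
    (hWg : ∀ x ξ, β' * Φ (frobNorm ξ) - 1 / β' ≤ W x ξ ∧ W x ξ ≤ β * (1 + Φ (frobNorm ξ)))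
    (ξα : M32) :
    ∃ L : ℝ, Tendsto (fun t : ℝ => (t ^ 2)⁻¹ * cellInf W ξα t (AdmSet t)) atTop (nhds L) :=
  stmt_2_general Φ hΦ W hW hWper β' β hβ' hWg ξα
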